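/- arXiv:1403.2410 — 2 statements merged into one kernel-verified Lean document; each statement's English description precedes it below -/
import Mathlib

section
/- Let Λ_{A₂²} be the lattice ℤ⁴ with Gram matrix [[2,−1,0,0],[−1,2,0,0],[0,0,2,−1],[0,0,−1,2]] (the orthogonal sum of two copies of the A₂ root lattice). Then the group SO₀(Λ_{A₂²}) of determinant-1 automorphisms of Λ_{A₂²} that induce the identity map on the discriminant group has order 18. -/
/-!
If `Q A = A Q = m • 1` (here `A = 3 Q⁻¹`, `m = 3`), the dual lattice is `m⁻¹ ℤⁿ A`, so an
isometry `M` acts trivially on `Λ*/Λ` iff `m` divides every entry of `A (M - 1)`. For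
`A₂ ⊕ A₂` this says that the rows `rᵢ` of `M` satisfy `r₀ - r₁ ≡ e₀ - e₁` and
`r₂ - r₃ ≡ e₂ - e₃ (mod 3)`: `M` fixes the generators `(e₀ - e₁)/3`, `(e₂ - e₃)/3` of the
discriminant group. Preserving the form forces every row to be one of the 12 roots; the
congruences then force `M` to be block diagonal with each block in the Weyl group `S₃` of `A₂`,
and `det M = 1` leaves `3 · 3 + 3 · 3 = 18` matrices.
-/

open Matrix

def IsIntVec {n : ℕ} (x : Fin n → ℚ) : Prop := ∀ i, ∃ c : ℤ, x i = (c : ℚ)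

lemma IsIntVec.add {n : ℕ} {u v : Fin n → ℚ} (hu : IsIntVec u) (hv : IsIntVec v) :
    IsIntVec (u + v) := by
  intro i
  obtain ⟨c, hc⟩ := hu i
  obtain ⟨d, hd⟩ := hv i
  exact ⟨c + d, by simp [hc, hd]⟩

lemma IsIntVec.neg {n : ℕ} {u : Fin n → ℚ} (hu : IsIntVec u) : IsIntVec (-u) := by
  intro i
  obtain ⟨c, hc⟩ := hu i
  exact ⟨-c, by simp [hc]⟩

lemma mapq_mul {n : ℕ} (M N : Matrix (Fin n) (Fin n) ℤ) :
    (M * N).map ((↑) : ℤ → ℚ) = M.map ((↑) : ℤ → ℚ) * N.map ((↑) : ℤ → ℚ) := by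
  ext i j
  simp [Matrix.mul_apply]

lemma mapq_one {n : ℕ} : ((1 : Matrix (Fin n) (Fin n) ℤ)).map ((↑) : ℤ → ℚ) = 1 :=
  Matrix.map_one _ Int.cast_zero Int.cast_one

lemma intvec_vecMul {n : ℕ} {x : Fin n → ℚ} (hx : IsIntVec x)
    (Z : Matrix (Fin n) (Fin n) ℤ) :
    IsIntVec (Matrix.vecMul x (Z.map ((↑) : ℤ → ℚ))) := by
  intro i
  choose c hc using hx
  refine ⟨∑ j, c j * Z j i, ?_⟩
  simp only [Matrix.vecMul, dotProduct, Matrix.map_apply]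
  push_cast
  exact Finset.sum_congr rfl fun j _ => by rw [hc j]

lemma dual_pres {n : ℕ} (Q : Matrix (Fin n) (Fin n) ℤ) (a : (Matrix (Fin n) (Fin n) ℤ)ˣ)
    (ha : (a : Matrix (Fin n) (Fin n) ℤ) * Q * (a : Matrix (Fin n) (Fin n) ℤ)ᵀ = Q)
    {x : Fin n → ℚ} (hx : IsIntVec (Matrix.vecMul x (Q.map ((↑) : ℤ → ℚ)))) :
    IsIntVec (Matrix.vecMul (Matrix.vecMul x ((a : Matrix (Fin n) (Fin n) ℤ).map ((↑) : ℤ → ℚ)))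
      (Q.map ((↑) : ℤ → ℚ))) := by
  have key : (a : Matrix (Fin n) (Fin n) ℤ) * Q = Q * ((a⁻¹ : (Matrix (Fin n) (Fin n) ℤ)ˣ) : Matrix (Fin n) (Fin n) ℤ)ᵀ := by
    have h1 : (a : Matrix (Fin n) (Fin n) ℤ)ᵀ * ((a⁻¹ : (Matrix (Fin n) (Fin n) ℤ)ˣ) : Matrix (Fin n) (Fin n) ℤ)ᵀ = 1 := by
      rw [← Matrix.transpose_mul, Units.inv_mul, Matrix.transpose_one]
    calc (a : Matrix (Fin n) (Fin n) ℤ) * Q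
        = ((a : Matrix (Fin n) (Fin n) ℤ) * Q * (a : Matrix (Fin n) (Fin n) ℤ)ᵀ) *
            ((a⁻¹ : (Matrix (Fin n) (Fin n) ℤ)ˣ) : Matrix (Fin n) (Fin n) ℤ)ᵀ := by
          rw [Matrix.mul_assoc, h1, Matrix.mul_one]
      _ = Q * ((a⁻¹ : (Matrix (Fin n) (Fin n) ℤ)ˣ) : Matrix (Fin n) (Fin n) ℤ)ᵀ := by rw [ha]
  rw [Matrix.vecMul_vecMul, ← mapq_mul, key, mapq_mul, ← Matrix.vecMul_vecMul]
  exact intvec_vecMul hx _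

def SOzero {n : ℕ} (Q : Matrix (Fin n) (Fin n) ℤ) : Subgroup (Matrix (Fin n) (Fin n) ℤ)ˣ where
  carrier := {U | (U : Matrix (Fin n) (Fin n) ℤ) * Q * (U : Matrix (Fin n) (Fin n) ℤ)ᵀ = Q ∧
      (U : Matrix (Fin n) (Fin n) ℤ).det = 1 ∧
      ∀ x : Fin n → ℚ, IsIntVec (Matrix.vecMul x (Q.map ((↑) : ℤ → ℚ))) →
        IsIntVec (Matrix.vecMul x ((U : Matrix (Fin n) (Fin n) ℤ).map ((↑) : ℤ → ℚ)) - x)}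
  one_mem' := by
    refine ⟨by simp, by simp, fun x hx i => ⟨0, ?_⟩⟩
    simp [mapq_one]
  mul_mem' := by
    rintro a b ⟨ha1, ha2, ha3⟩ ⟨hb1, hb2, hb3⟩
    have hab1 : ((a * b : (Matrix (Fin n) (Fin n) ℤ)ˣ) : Matrix (Fin n) (Fin n) ℤ) * Q *
        ((a * b : (Matrix (Fin n) (Fin n) ℤ)ˣ) : Matrix (Fin n) (Fin n) ℤ)ᵀ = Q := by
      rw [Units.val_mul, Matrix.transpose_mul]
      calc (a : Matrix (Fin n) (Fin n) ℤ) * b * Q * ((b : Matrix (Fin n) (Fin n) ℤ)ᵀ * (a : Matrix (Fin n) (Fin n) ℤ)ᵀ)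
          = (a : Matrix (Fin n) (Fin n) ℤ) * ((b : Matrix (Fin n) (Fin n) ℤ) * Q * (b : Matrix (Fin n) (Fin n) ℤ)ᵀ) * (a : Matrix (Fin n) (Fin n) ℤ)ᵀ := by
            noncomm_ring
        _ = Q := by rw [hb1, ha1]
    refine ⟨hab1, by rw [Units.val_mul, Matrix.det_mul, ha2, hb2, one_mul], fun x hx => ?_⟩
    have hy := dual_pres Q a ha1 hx
    set y := Matrix.vecMul x ((a : Matrix (Fin n) (Fin n) ℤ).map ((↑) : ℤ → ℚ)) with hydef
    have h1 : IsIntVec (Matrix.vecMul y ((b : Matrix (Fin n) (Fin n) ℤ).map ((↑) : ℤ → ℚ)) - y) :=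
      hb3 y hy
    have h2 : IsIntVec (y - x) := ha3 x hx
    have hrw : Matrix.vecMul x (((a * b : (Matrix (Fin n) (Fin n) ℤ)ˣ) : Matrix (Fin n) (Fin n) ℤ).map ((↑) : ℤ → ℚ)) - x =
        (Matrix.vecMul y ((b : Matrix (Fin n) (Fin n) ℤ).map ((↑) : ℤ → ℚ)) - y) + (y - x) := by
      rw [Units.val_mul, mapq_mul, ← Matrix.vecMul_vecMul, ← hydef]
      abel
    rw [hrw]
    exact h1.add h2
  inv_mem' := by
    rintro a ⟨ha1, ha2, ha3⟩
    have hi1 : ((a⁻¹ : (Matrix (Fin n) (Fin n) ℤ)ˣ) : Matrix (Fin n) (Fin n) ℤ) * Q *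
        ((a⁻¹ : (Matrix (Fin n) (Fin n) ℤ)ˣ) : Matrix (Fin n) (Fin n) ℤ)ᵀ = Q := by
      have h1 : (a : Matrix (Fin n) (Fin n) ℤ)ᵀ * ((a⁻¹ : (Matrix (Fin n) (Fin n) ℤ)ˣ) : Matrix (Fin n) (Fin n) ℤ)ᵀ = 1 := by
        rw [← Matrix.transpose_mul, Units.inv_mul, Matrix.transpose_one]
      have h2 : ((a⁻¹ : (Matrix (Fin n) (Fin n) ℤ)ˣ) : Matrix (Fin n) (Fin n) ℤ) * (a : Matrix (Fin n) (Fin n) ℤ) = 1 := Units.inv_mul a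
      calc ((a⁻¹ : (Matrix (Fin n) (Fin n) ℤ)ˣ) : Matrix (Fin n) (Fin n) ℤ) * Q * ((a⁻¹ : (Matrix (Fin n) (Fin n) ℤ)ˣ) : Matrix (Fin n) (Fin n) ℤ)ᵀ
          = ((a⁻¹ : (Matrix (Fin n) (Fin n) ℤ)ˣ) : Matrix (Fin n) (Fin n) ℤ) * ((a : Matrix (Fin n) (Fin n) ℤ) * Q * (a : Matrix (Fin n) (Fin n) ℤ)ᵀ) * ((a⁻¹ : (Matrix (Fin n) (Fin n) ℤ)ˣ) : Matrix (Fin n) (Fin n) ℤ)ᵀ := by rw [ha1]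
        _ = (((a⁻¹ : (Matrix (Fin n) (Fin n) ℤ)ˣ) : Matrix (Fin n) (Fin n) ℤ) * (a : Matrix (Fin n) (Fin n) ℤ)) * Q * ((a : Matrix (Fin n) (Fin n) ℤ)ᵀ * ((a⁻¹ : (Matrix (Fin n) (Fin n) ℤ)ˣ) : Matrix (Fin n) (Fin n) ℤ)ᵀ) := by noncomm_ring
        _ = Q := by rw [h1, h2, Matrix.one_mul, Matrix.mul_one]
    have hi2 : ((a⁻¹ : (Matrix (Fin n) (Fin n) ℤ)ˣ) : Matrix (Fin n) (Fin n) ℤ).det = 1 := by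
      have := Matrix.det_mul ((a⁻¹ : (Matrix (Fin n) (Fin n) ℤ)ˣ) : Matrix (Fin n) (Fin n) ℤ) (a : Matrix (Fin n) (Fin n) ℤ)
      rw [Units.inv_mul, Matrix.det_one, ha2, mul_one] at this
      exact this.symm
    refine ⟨hi1, hi2, fun x hx => ?_⟩
    have hy := dual_pres Q a⁻¹ hi1 hx
    set y := Matrix.vecMul x (((a⁻¹ : (Matrix (Fin n) (Fin n) ℤ)ˣ) : Matrix (Fin n) (Fin n) ℤ).map ((↑) : ℤ → ℚ)) with hydef
    have h1 : IsIntVec (Matrix.vecMul y ((a : Matrix (Fin n) (Fin n) ℤ).map ((↑) : ℤ → ℚ)) - y) :=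
      ha3 y hy
    have hyx : Matrix.vecMul y ((a : Matrix (Fin n) (Fin n) ℤ).map ((↑) : ℤ → ℚ)) = x := by
      rw [hydef, Matrix.vecMul_vecMul, ← mapq_mul, Units.inv_mul, mapq_one, Matrix.vecMul_one]
    rw [hyx] at h1
    have : y - x = -(x - y) := by abel
    rw [this]
    exact h1.neg


/-- The Gram matrix of the lattice A₂ ⊕ A₂. -/
def QA2A2 : Matrix (Fin 4) (Fin 4) ℤ := !![2,-1,0,0; -1,2,0,0; 0,0,2,-1; 0,0,-1,2]

section DiscriminantAction

variable {n : ℕ}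

lemma isIntVec_iff_exists_intCast {x : Fin n → ℚ} :
    IsIntVec x ↔ ∃ c : Fin n → ℤ, x = fun i => (c i : ℚ) :=
  ⟨fun h => ⟨fun i => (h i).choose, funext fun i => (h i).choose_spec⟩,
    fun ⟨c, hc⟩ i => ⟨c i, congrFun hc i⟩⟩

lemma mapq_smul (m : ℤ) (N : Matrix (Fin n) (Fin n) ℤ) :
    (m • N).map ((↑) : ℤ → ℚ) = (m : ℚ) • N.map ((↑) : ℤ → ℚ) :=
  Matrix.map_smul' _ m N fun a b => Int.cast_mul a b

lemma mapq_sub_one (N : Matrix (Fin n) (Fin n) ℤ) :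
    (N - 1).map ((↑) : ℤ → ℚ) = N.map ((↑) : ℤ → ℚ) - 1 := by
  rw [Matrix.map_sub _ fun a b => Int.cast_sub a b, mapq_one]

lemma intCast_vecMul (c : Fin n → ℤ) (B : Matrix (Fin n) (Fin n) ℤ) :
    (fun k => (c k : ℚ)) ᵥ* B.map ((↑) : ℤ → ℚ) = fun j => ((c ᵥ* B) j : ℚ) :=
  funext fun j => (RingHom.map_vecMul (Int.castRingHom ℚ) B c j).symm

lemma smul_vecMul_sub_self_eq {Q A M : Matrix (Fin n) (Fin n) ℤ} {m : ℤ} (hQA : Q * A = m • 1)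
    (x : Fin n → ℚ) :
    (m : ℚ) • (x ᵥ* M.map ((↑) : ℤ → ℚ) - x) =
      x ᵥ* Q.map ((↑) : ℤ → ℚ) ᵥ* (A * (M - 1)).map ((↑) : ℤ → ℚ) := by
  rw [vecMul_vecMul, ← mapq_mul, ← Matrix.mul_assoc, hQA, smul_mul, Matrix.one_mul,
    mapq_smul, mapq_sub_one, vecMul_smul, vecMul_sub, vecMul_one]

theorem forall_isIntVec_vecMul_sub_iff {Q A M : Matrix (Fin n) (Fin n) ℤ} {m : ℤ} (hm : m ≠ 0)
    (hQA : Q * A = m • 1) (hAQ : A * Q = m • 1) :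
    (∀ x : Fin n → ℚ, IsIntVec (x ᵥ* Q.map ((↑) : ℤ → ℚ)) →
        IsIntVec (x ᵥ* M.map ((↑) : ℤ → ℚ) - x)) ↔
      ∀ i j, m ∣ (A * (M - 1)) i j := by
  have hm' : (m : ℚ) ≠ 0 := Int.cast_ne_zero.2 hm
  constructor
  · intro h i j
    set y : Fin n → ℚ := fun k => ((Pi.single i 1 : Fin n → ℤ) k : ℚ)
    set x : Fin n → ℚ := (m : ℚ)⁻¹ • (y ᵥ* A.map ((↑) : ℤ → ℚ))
    have hxQ : x ᵥ* Q.map ((↑) : ℤ → ℚ) = y := by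
      rw [smul_vecMul, vecMul_vecMul, ← mapq_mul, hAQ, mapq_smul, mapq_one, vecMul_smul,
        vecMul_one, smul_smul, inv_mul_cancel₀ hm', one_smul]
    obtain ⟨c, hc⟩ := h x (hxQ ▸ fun k => ⟨_, rfl⟩) j
    have hj := congrFun (smul_vecMul_sub_self_eq hQA (M := M) x) j
    rw [hxQ, intCast_vecMul, single_one_vecMul, Pi.smul_apply, hc, smul_eq_mul] at hj
    exact ⟨c, Int.cast_injective (hj.symm.trans (Int.cast_mul m c).symm)⟩
  · intro h x hx
    obtain ⟨c, hc⟩ := isIntVec_iff_exists_intCast.1 hx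
    choose D hD using h
    have hAD : A * (M - 1) = m • Matrix.of D := by ext i j; exact hD i j
    have key := smul_vecMul_sub_self_eq hQA (M := M) x
    rw [hc, hAD, mapq_smul, vecMul_smul] at key
    rw [smul_right_injective _ hm' key]
    exact intvec_vecMul (fun i => ⟨c i, rfl⟩) _

lemma mem_SOzero_iff_dvd {Q A : Matrix (Fin n) (Fin n) ℤ} {m : ℤ} (hm : m ≠ 0)
    (hQA : Q * A = m • 1) (hAQ : A * Q = m • 1) (U : (Matrix (Fin n) (Fin n) ℤ)ˣ) :
    U ∈ SOzero Q ↔ (U : Matrix (Fin n) (Fin n) ℤ) * Q * (U : Matrix (Fin n) (Fin n) ℤ)ᵀ = Q ∧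
      (U : Matrix (Fin n) (Fin n) ℤ).det = 1 ∧
      ∀ i j, m ∣ (A * (U - 1 : Matrix (Fin n) (Fin n) ℤ)) i j := by
  rw [← forall_isIntVec_vecMul_sub_iff hm hQA hAQ]
  rfl

end DiscriminantAction

def threeInvQA2A2 : Matrix (Fin 4) (Fin 4) ℤ := !![2,1,0,0; 1,2,0,0; 0,0,2,1; 0,0,1,2]

lemma QA2A2_mul_threeInvQA2A2 : QA2A2 * threeInvQA2A2 = (3 : ℤ) • 1 := by decide

lemma threeInvQA2A2_mul_QA2A2 : threeInvQA2A2 * QA2A2 = (3 : ℤ) • 1 := by decide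

def rootsA2A2 : List (Fin 4 → ℤ) :=
  [![1,0,0,0], ![-1,0,0,0], ![0,1,0,0], ![0,-1,0,0], ![1,1,0,0], ![-1,-1,0,0],
   ![0,0,1,0], ![0,0,-1,0], ![0,0,0,1], ![0,0,0,-1], ![0,0,1,1], ![0,0,-1,-1]]

lemma mem_Icc_of_A2_norm_le_one {a b : ℤ} (h : a * a - a * b + b * b ≤ 1) :
    a ∈ Finset.Icc (-1) 1 ∧ b ∈ Finset.Icc (-1) 1 := by
  simp only [Finset.mem_Icc]
  refine ⟨⟨?_, ?_⟩, ?_, ?_⟩ <;> nlinarith [sq_nonneg (2 * a - b), sq_nonneg (2 * b - a)]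

lemma mem_rootsA2A2_of_mem_piFinset :
    ∀ v ∈ Fintype.piFinset fun _ : Fin 4 => Finset.Icc (-1 : ℤ) 1,
      v ⬝ᵥ QA2A2 *ᵥ v = 2 → v ∈ rootsA2A2 := by
  decide +kernel

lemma mem_rootsA2A2 {v : Fin 4 → ℤ} (hv : v ⬝ᵥ QA2A2 *ᵥ v = 2) : v ∈ rootsA2A2 := by
  have hsum : (v 0 * v 0 - v 0 * v 1 + v 1 * v 1) + (v 2 * v 2 - v 2 * v 3 + v 3 * v 3) = 1 := by
    simp only [dotProduct, mulVec, QA2A2, of_apply, cons_val', cons_val_fin_one, Fin.sum_univ_four,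
      cons_val_zero, cons_val_one, cons_val, neg_mul, one_mul, zero_mul, add_zero, zero_add] at hv
    linarith
  obtain ⟨h0, h1⟩ := mem_Icc_of_A2_norm_le_one (a := v 0) (b := v 1)
    (by nlinarith [sq_nonneg (2 * v 2 - v 3), sq_nonneg (v 3)])
  obtain ⟨h2, h3⟩ := mem_Icc_of_A2_norm_le_one (a := v 2) (b := v 3)
    (by nlinarith [sq_nonneg (2 * v 0 - v 1), sq_nonneg (v 1)])
  refine mem_rootsA2A2_of_mem_piFinset v (Fintype.mem_piFinset.2 ?_) hv
  intro i
  fin_cases i <;> assumption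

lemma row_mem_rootsA2A2 {M : Matrix (Fin 4) (Fin 4) ℤ} (hM : M * QA2A2 * Mᵀ = QA2A2)
    (i : Fin 4) : M i ∈ rootsA2A2 := by
  have hii := congrFun (congrFun hM i) i
  rw [mul_mul_apply, transpose_transpose] at hii
  exact mem_rootsA2A2 (hii.trans (by fin_cases i <;> rfl))

lemma threeInvQA2A2_mul_apply_zero (N : Matrix (Fin 4) (Fin 4) ℤ) (j : Fin 4) :
    (threeInvQA2A2 * N) 0 j = 2 * N 0 j + N 1 j := by
  simp [threeInvQA2A2, mul_apply, Fin.sum_univ_four]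

lemma threeInvQA2A2_mul_apply_two (N : Matrix (Fin 4) (Fin 4) ℤ) (j : Fin 4) :
    (threeInvQA2A2 * N) 2 j = 2 * N 2 j + N 3 j := by
  simp [threeInvQA2A2, mul_apply, Fin.sum_univ_four]

lemma dvd_rows_sub_of_dvd {M : Matrix (Fin 4) (Fin 4) ℤ}
    (h : ∀ i j, 3 ∣ (threeInvQA2A2 * (M - 1)) i j) (j : Fin 4) :
    3 ∣ (M 0 - M 1) j - ![1, -1, 0, 0] j ∧ 3 ∣ (M 2 - M 3) j - ![0, 0, 1, -1] j := by
  have h0 := h 0 j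
  have h2 := h 2 j
  rw [threeInvQA2A2_mul_apply_zero, Matrix.sub_apply, Matrix.sub_apply] at h0
  rw [threeInvQA2A2_mul_apply_two, Matrix.sub_apply, Matrix.sub_apply] at h2
  have e₀₁ : (1 : Matrix (Fin 4) (Fin 4) ℤ) 0 j - (1 : Matrix (Fin 4) (Fin 4) ℤ) 1 j =
      ![1, -1, 0, 0] j := by
    fin_cases j <;> rfl
  have e₂₃ : (1 : Matrix (Fin 4) (Fin 4) ℤ) 2 j - (1 : Matrix (Fin 4) (Fin 4) ℤ) 3 j =
      ![0, 0, 1, -1] j := by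
    fin_cases j <;> rfl
  simp only [Pi.sub_apply]
  omega

def SOzeroA2A2List : List (Matrix (Fin 4) (Fin 4) ℤ) :=
  [ !![-1,-1,0,0; 1,0,0,0; 0,0,-1,-1; 0,0,1,0],
    !![-1,-1,0,0; 1,0,0,0; 0,0,0,1; 0,0,-1,-1],
    !![-1,-1,0,0; 1,0,0,0; 0,0,1,0; 0,0,0,1],
    !![-1,0,0,0; 1,1,0,0; 0,0,-1,0; 0,0,1,1],
    !![-1,0,0,0; 1,1,0,0; 0,0,0,-1; 0,0,-1,0],
    !![-1,0,0,0; 1,1,0,0; 0,0,1,1; 0,0,0,-1],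
    !![0,-1,0,0; -1,0,0,0; 0,0,-1,0; 0,0,1,1],
    !![0,-1,0,0; -1,0,0,0; 0,0,0,-1; 0,0,-1,0],
    !![0,-1,0,0; -1,0,0,0; 0,0,1,1; 0,0,0,-1],
    !![0,1,0,0; -1,-1,0,0; 0,0,-1,-1; 0,0,1,0],
    !![0,1,0,0; -1,-1,0,0; 0,0,0,1; 0,0,-1,-1],
    !![0,1,0,0; -1,-1,0,0; 0,0,1,0; 0,0,0,1],
    !![1,0,0,0; 0,1,0,0; 0,0,-1,-1; 0,0,1,0],
    !![1,0,0,0; 0,1,0,0; 0,0,0,1; 0,0,-1,-1],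
    !![1,0,0,0; 0,1,0,0; 0,0,1,0; 0,0,0,1],
    !![1,1,0,0; 0,-1,0,0; 0,0,-1,0; 0,0,1,1],
    !![1,1,0,0; 0,-1,0,0; 0,0,0,-1; 0,0,-1,0],
    !![1,1,0,0; 0,-1,0,0; 0,0,1,1; 0,0,0,-1] ]

lemma of_rows_mem_SOzeroA2A2List :
    ∀ r₀ ∈ rootsA2A2, ∀ r₁ ∈ rootsA2A2, (∀ j, 3 ∣ (r₀ - r₁) j - ![1, -1, 0, 0] j) →
    ∀ r₂ ∈ rootsA2A2, ∀ r₃ ∈ rootsA2A2, (∀ j, 3 ∣ (r₂ - r₃) j - ![0, 0, 1, -1] j) →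
    (of ![r₀, r₁, r₂, r₃]).det = 1 → of ![r₀, r₁, r₂, r₃] ∈ SOzeroA2A2List := by
  decide +kernel

lemma forall_mem_SOzeroA2A2List :
    ∀ M ∈ SOzeroA2A2List, M * QA2A2 * Mᵀ = QA2A2 ∧ M.det = 1 ∧
      ∀ i j, 3 ∣ (threeInvQA2A2 * (M - 1)) i j := by
  decide +kernel

lemma mem_SOzero_QA2A2_iff (U : (Matrix (Fin 4) (Fin 4) ℤ)ˣ) :
    U ∈ SOzero QA2A2 ↔ (U : Matrix (Fin 4) (Fin 4) ℤ) ∈ SOzeroA2A2List := by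
  rw [mem_SOzero_iff_dvd three_ne_zero QA2A2_mul_threeInvQA2A2 threeInvQA2A2_mul_QA2A2]
  refine ⟨fun ⟨hQ, hdet, hdvd⟩ => ?_, forall_mem_SOzeroA2A2List _⟩
  have hrows : (U : Matrix (Fin 4) (Fin 4) ℤ) = of ![U.val 0, U.val 1, U.val 2, U.val 3] := by
    ext i : 1
    fin_cases i <;> rfl
  rw [hrows] at hdet ⊢
  exact of_rows_mem_SOzeroA2A2List _ (row_mem_rootsA2A2 hQ 0) _ (row_mem_rootsA2A2 hQ 1)
    (fun j => (dvd_rows_sub_of_dvd hdvd j).1) _ (row_mem_rootsA2A2 hQ 2) _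
    (row_mem_rootsA2A2 hQ 3) (fun j => (dvd_rows_sub_of_dvd hdvd j).2) hdet

lemma range_val_SOzero_QA2A2 :
    Set.range (fun U : SOzero QA2A2 => (U.1 : Matrix (Fin 4) (Fin 4) ℤ)) =
      {M | M ∈ SOzeroA2A2List} := by
  ext M
  refine ⟨?_, fun hM => ?_⟩
  · rintro ⟨U, rfl⟩
    exact (mem_SOzero_QA2A2_iff U).1 U.2
  · have hM' : IsUnit M :=
      (isUnit_iff_isUnit_det M).2 ((forall_mem_SOzeroA2A2List M hM).2.1 ▸ isUnit_one)
    exact ⟨⟨hM'.unit, (mem_SOzero_QA2A2_iff _).2 hM⟩, rfl⟩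

theorem statement11 : Nat.card ↥(SOzero QA2A2) = 18 := by
  have hinj : Function.Injective (fun U : SOzero QA2A2 => (U.1 : Matrix (Fin 4) (Fin 4) ℤ)) :=
    fun _ _ h => Subtype.ext (Units.ext h)
  rw [← Nat.card_range_of_injective hinj, range_val_SOzero_QA2A2, ← List.coe_toFinset,
    Nat.card_coe_set_eq, Set.ncard_coe_finset, List.toFinset_card_of_nodup (by decide +kernel)]
  rfl
end

section
/- Let Λ_{A₃} be the A₃ root lattice, i.e. ℤ³ with Gram matrix [[2,−1,0],[−1,2,−1],[0,−1,2]]. Then the group SO₀(Λ_{A₃}) of determinant-1 automorphisms of Λ_{A₃} that induce the identity map on the discriminant group Λ_{A₃}*/Λ_{A₃} is isomorphic to the alternating group Alt(4); in particular it has order 12. -/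
/-!
STATEMENT 14: The group SO₀(Λ_{A₃}) of determinant-1 automorphisms of the A₃ root
lattice that induce the identity map on the discriminant group is isomorphic to the
alternating group Alt(4); in particular it has order 12.
-/

open Matrix

open Matrix

/-- The Gram matrix of the A₃ root lattice. -/
def QA3 : Matrix (Fin 3) (Fin 3) ℤ := !![2,-1,0; -1,2,-1; 0,-1,2]

/-!
The dual of `A₃` is `Λ + ℤ ϖ₁` with `ϖ₁ = (3/4, 1/2, 1/4)`, so an isometry of determinant `1`
lies in `SO₀` iff it fixes `4 ϖ₁ = (3, 2, 1)` modulo `4`, a decidable condition. An isometry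
sends the simple roots to roots, and `A₃` has only twelve roots, so `SO₀` is finite and can be
listed: it is exactly the image of the even permutations under the faithful action of `S₄` on
`A₃ = {x ∈ ℤ⁴ | ∑ xᵢ = 0}` by permuting coordinates.
-/

lemma IsIntVec.sub {n : ℕ} {u v : Fin n → ℚ} (hu : IsIntVec u) (hv : IsIntVec v) :
    IsIntVec (u - v) :=
  sub_eq_add_neg u v ▸ hu.add hv.neg

lemma IsIntVec.zsmul {n : ℕ} {u : Fin n → ℚ} (hu : IsIntVec u) (k : ℤ) :
    IsIntVec ((k : ℚ) • u) := by
  intro i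
  obtain ⟨c, hc⟩ := hu i
  exact ⟨k * c, by simp [hc]⟩

lemma isIntVec_inv_smul_iff {n : ℕ} {m : ℤ} (hm : m ≠ 0) (v : Fin n → ℤ) :
    IsIntVec ((m : ℚ)⁻¹ • ((↑) ∘ v : Fin n → ℚ)) ↔ ∀ i, m ∣ v i := by
  have hm' : (m : ℚ) ≠ 0 := Int.cast_ne_zero.mpr hm
  refine forall_congr' fun i => ⟨fun ⟨c, hc⟩ => ⟨c, ?_⟩, fun ⟨c, hc⟩ => ⟨c, ?_⟩⟩
  · have : (v i : ℚ) = m * c := by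
      rw [← hc]; simp [hm']
    exact_mod_cast this
  · simp [hc, hm']

lemma smul_cast_vecMul_sub {n : ℕ} (q : ℚ) (v : Fin n → ℤ)
    (U : Matrix (Fin n) (Fin n) ℤ) :
    (q • ((↑) ∘ v : Fin n → ℚ)) ᵥ* U.map (↑) - q • ((↑) ∘ v) =
      q • ((↑) ∘ (v ᵥ* U - v) : Fin n → ℚ) := by
  rw [Matrix.smul_vecMul, ← smul_sub]
  congr 1
  ext j
  simp [Matrix.vecMul, dotProduct]

lemma forall_isIntVec_vecMul_sub_iff_s14 {n : ℕ} {Q : Matrix (Fin n) (Fin n) ℤ}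
    {w : Fin n → ℚ} (hw : IsIntVec (w ᵥ* Q.map (↑)))
    (hdual : ∀ x : Fin n → ℚ, IsIntVec (x ᵥ* Q.map (↑)) →
      ∃ (k : ℤ) (z : Fin n → ℚ), IsIntVec z ∧ x = (k : ℚ) • w + z)
    (U : Matrix (Fin n) (Fin n) ℤ) :
    (∀ x : Fin n → ℚ, IsIntVec (x ᵥ* Q.map (↑)) → IsIntVec (x ᵥ* U.map (↑) - x)) ↔
      IsIntVec (w ᵥ* U.map (↑) - w) := by
  refine ⟨fun h => h w hw, fun h x hx => ?_⟩
  obtain ⟨k, z, hz, rfl⟩ := hdual x hx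
  have hsplit : ((k : ℚ) • w + z) ᵥ* U.map (↑) - ((k : ℚ) • w + z) =
      (k : ℚ) • (w ᵥ* U.map (↑) - w) + (z ᵥ* U.map (↑) - z) := by
    rw [Matrix.add_vecMul, Matrix.smul_vecMul, smul_sub]
    abel
  rw [hsplit]
  exact (h.zsmul k).add ((intvec_vecMul hz U).sub hz)

section A3

open Equiv

/-- `4 ϖ₁`, for the fundamental weight `ϖ₁ = (3/4, 1/2, 1/4)`, which satisfies `ϖ₁ QA3 = e₀`
and generates `Λ*/Λ ≅ ℤ/4`. -/
def weightA3 : Fin 3 → ℤ := ![3, 2, 1]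

lemma isIntVec_weightA3_vecMul :
    IsIntVec (((4 : ℚ)⁻¹ • ((↑) ∘ weightA3 : Fin 3 → ℚ)) ᵥ* QA3.map (↑)) := by
  have hw :
      ((4 : ℚ)⁻¹ • ((↑) ∘ weightA3 : Fin 3 → ℚ)) ᵥ* QA3.map (↑) = ![1, 0, 0] := by
    ext i
    fin_cases i <;> norm_num [weightA3, QA3, Matrix.vecMul, dotProduct, Fin.sum_univ_succ]
  rw [hw]
  intro i
  fin_cases i <;> exact ⟨_, rfl⟩

lemma exists_eq_zsmul_weightA3_add (x : Fin 3 → ℚ) (hx : IsIntVec (x ᵥ* QA3.map (↑))) :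
    ∃ (k : ℤ) (z : Fin 3 → ℚ), IsIntVec z ∧
      x = (k : ℚ) • ((4 : ℚ)⁻¹ • ((↑) ∘ weightA3 : Fin 3 → ℚ)) + z := by
  choose c hc using hx
  have h0 : x 0 * 2 - x 1 = c 0 := by
    simpa [QA3, Matrix.vecMul, dotProduct, Fin.sum_univ_three, sub_eq_add_neg] using hc 0
  have h1 : -x 0 + x 1 * 2 - x 2 = c 1 := by
    simpa [QA3, Matrix.vecMul, dotProduct, Fin.sum_univ_three, sub_eq_add_neg] using hc 1
  have h2 : -x 1 + x 2 * 2 = c 2 := by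
    simpa [QA3, Matrix.vecMul, dotProduct, Fin.sum_univ_three] using hc 2
  -- `x = c adj(QA3) / 4` and `adj(QA3) = (1, 2, -1)ᵀ (3, 2, 1) + 4 !![0,0,0; -1,0,0; 1,1,1]`
  refine ⟨c 0 + 2 * c 1 - c 2, ![(c 2 - c 1 : ℤ), (c 2 : ℤ), (c 2 : ℤ)], ?_, ?_⟩
  · intro i
    fin_cases i <;> exact ⟨_, rfl⟩
  · ext i
    fin_cases i <;> simp [weightA3] <;> linarith

def IsSOzeroA3 (U : Matrix (Fin 3) (Fin 3) ℤ) : Prop :=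
  U * QA3 * Uᵀ = QA3 ∧ U.det = 1 ∧ ∀ j, (4 : ℤ) ∣ (weightA3 ᵥ* U - weightA3) j

instance : DecidablePred IsSOzeroA3 := fun U => by unfold IsSOzeroA3; infer_instance

lemma mem_SOzero_QA3_iff (U : (Matrix (Fin 3) (Fin 3) ℤ)ˣ) :
    U ∈ SOzero QA3 ↔ IsSOzeroA3 U.val := by
  show _ ∧ _ ∧ _ ↔ _ ∧ _ ∧ _
  rw [forall_isIntVec_vecMul_sub_iff_s14 isIntVec_weightA3_vecMul exists_eq_zsmul_weightA3_add,
    smul_cast_vecMul_sub, ← isIntVec_inv_smul_iff four_ne_zero, Int.cast_ofNat]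

/-- The twelve roots of `A₃`, in the basis of simple roots. -/
def rootsA3 : List (ℤ × ℤ × ℤ) :=
  [(1, 0, 0), (-1, 0, 0), (0, 1, 0), (0, -1, 0), (0, 0, 1), (0, 0, -1),
   (1, 1, 0), (-1, -1, 0), (0, 1, 1), (0, -1, -1), (1, 1, 1), (-1, -1, -1)]

/-- The left side is the squared norm of `(a, b - a, c - b, -c)`, the image of `(a, b, c)` in
`ℤ⁴`; a vector of norm `2` there has exactly two nonzero entries, `±1`. -/
lemma mem_rootsA3_of_norm_eq_two (a b c : ℤ)
    (h : a ^ 2 + (a - b) ^ 2 + (b - c) ^ 2 + c ^ 2 = 2) :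
    (a, b, c) ∈ rootsA3 := by
  have hunit : ∀ t : ℤ, t ^ 2 ≤ 2 → -1 ≤ t ∧ t ≤ 1 := fun _ _ => ⟨by nlinarith, by nlinarith⟩
  obtain ⟨ha, ha'⟩ := hunit a (by nlinarith [sq_nonneg (a - b), sq_nonneg (b - c), sq_nonneg c])
  obtain ⟨hab, hab'⟩ :=
    hunit (a - b) (by nlinarith [sq_nonneg a, sq_nonneg (b - c), sq_nonneg c])
  obtain ⟨hc, hc'⟩ := hunit c (by nlinarith [sq_nonneg a, sq_nonneg (a - b), sq_nonneg (b - c)])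
  have hbox : ∀ a ∈ Finset.Icc (-1 : ℤ) 1, ∀ b ∈ Finset.Icc (-2 : ℤ) 2,
      ∀ c ∈ Finset.Icc (-1 : ℤ) 1,
        a ^ 2 + (a - b) ^ 2 + (b - c) ^ 2 + c ^ 2 = 2 → (a, b, c) ∈ rootsA3 := by
    decide
  exact hbox a (Finset.mem_Icc.2 ⟨ha, ha'⟩) b (Finset.mem_Icc.2 ⟨by omega, by omega⟩) c
    (Finset.mem_Icc.2 ⟨hc, hc'⟩) h

lemma row_mem_rootsA3 {U : Matrix (Fin 3) (Fin 3) ℤ} (hU : U * QA3 * Uᵀ = QA3) (i : Fin 3) :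
    (U i 0, U i 1, U i 2) ∈ rootsA3 := by
  apply mem_rootsA3_of_norm_eq_two
  have hii : (U * QA3 * Uᵀ) i i = 2 := by
    rw [hU]; fin_cases i <;> rfl
  simp only [QA3, Matrix.mul_apply, Matrix.of_apply, Matrix.cons_val', Matrix.cons_val_fin_one,
    Fin.sum_univ_three, Matrix.cons_val_zero, Matrix.cons_val_one, Matrix.cons_val,
    Matrix.transpose_apply, mul_neg, mul_one, mul_zero, add_zero, zero_add] at hii
  linear_combination hii

/-- Row `i` holds the coordinates of `e (σ i) - e (σ (i + 1))` in the simple roots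
`αⱼ = e j - e (j + 1)` of `A₃ ⊂ ℤ⁴`. -/
def permMatrixA3 (σ : Perm (Fin 4)) : Matrix (Fin 3) (Fin 3) ℤ :=
  Matrix.of fun i j =>
    (if (σ i.castSucc : ℕ) ≤ j then 1 else 0) - (if (σ i.succ : ℕ) ≤ j then 1 else 0)

lemma permMatrixA3_one : permMatrixA3 1 = 1 := by decide

lemma permMatrixA3_mul :
    ∀ σ τ : Perm (Fin 4), permMatrixA3 (σ * τ) = permMatrixA3 τ * permMatrixA3 σ := by
  decide

lemma permMatrixA3_injective : Function.Injective permMatrixA3 := by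
  unfold Function.Injective
  decide

lemma isSOzeroA3_permMatrixA3 :
    ∀ σ : Perm (Fin 4), Perm.sign σ = 1 → IsSOzeroA3 (permMatrixA3 σ) := by
  decide

lemma exists_permMatrixA3_eq_of_mem_rootsA3 :
    ∀ x ∈ rootsA3, ∀ y ∈ rootsA3, ∀ z ∈ rootsA3,
      IsSOzeroA3 !![x.1, x.2.1, x.2.2; y.1, y.2.1, y.2.2; z.1, z.2.1, z.2.2] →
    ∃ σ : Perm (Fin 4), Perm.sign σ = 1 ∧
      !![x.1, x.2.1, x.2.2; y.1, y.2.1, y.2.2; z.1, z.2.1, z.2.2] = permMatrixA3 σ := by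
  decide

lemma exists_permMatrixA3_eq {U : Matrix (Fin 3) (Fin 3) ℤ} (hU : IsSOzeroA3 U) :
    ∃ σ : Perm (Fin 4), Perm.sign σ = 1 ∧ U = permMatrixA3 σ := by
  have hrows : U = !![U 0 0, U 0 1, U 0 2; U 1 0, U 1 1, U 1 2; U 2 0, U 2 1, U 2 2] := by
    ext i j; fin_cases i <;> fin_cases j <;> rfl
  rw [hrows] at hU ⊢
  exact exists_permMatrixA3_eq_of_mem_rootsA3 _ (row_mem_rootsA3 hU.1 0) _
    (row_mem_rootsA3 hU.1 1) _ (row_mem_rootsA3 hU.1 2) hU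

def permRepA3 : Perm (Fin 4) →* (Matrix (Fin 3) (Fin 3) ℤ)ˣ where
  toFun σ := ⟨permMatrixA3 σ⁻¹, permMatrixA3 σ,
    by rw [← permMatrixA3_mul, mul_inv_cancel, permMatrixA3_one],
    by rw [← permMatrixA3_mul, inv_mul_cancel, permMatrixA3_one]⟩
  map_one' := Units.ext (by simp [permMatrixA3_one])
  map_mul' _ _ := Units.ext (by simp [permMatrixA3_mul])

lemma permRepA3_injective : Function.Injective permRepA3 := fun _ _ h =>
  inv_injective (permMatrixA3_injective (congrArg Units.val h))

lemma map_alternatingGroup_permRepA3 :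
    (alternatingGroup (Fin 4)).map permRepA3 = SOzero QA3 := by
  ext U
  rw [Subgroup.mem_map, mem_SOzero_QA3_iff]
  constructor
  · rintro ⟨σ, hσ, rfl⟩
    exact isSOzeroA3_permMatrixA3 _ (by rw [map_inv, Perm.mem_alternatingGroup.mp hσ, inv_one])
  · intro hU
    obtain ⟨σ, hσ, hUσ⟩ := exists_permMatrixA3_eq hU
    exact ⟨σ⁻¹, by rw [Perm.mem_alternatingGroup, map_inv, hσ, inv_one],
      Units.ext (by simp [permRepA3, hUσ])⟩

end A3

theorem statement14 :
    Nonempty (↥(SOzero QA3) ≃* ↥(alternatingGroup (Fin 4))) ∧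
    Nat.card ↥(SOzero QA3) = 12 := by
  let e : alternatingGroup (Fin 4) ≃* SOzero QA3 :=
    ((alternatingGroup (Fin 4)).equivMapOfInjective permRepA3 permRepA3_injective).trans
      (MulEquiv.subgroupCongr map_alternatingGroup_permRepA3)
  refine ⟨⟨e.symm⟩, ?_⟩
  rw [← Nat.card_congr e.toEquiv, nat_card_alternatingGroup, Nat.card_fin]
  rfl
end
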